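/- Sufficient condition for optimal global performance (dynamics-first): if x0 has at least one nonzero entry, there exists Φ satisfying both the dynamics constraint Z_{AB}Φ=[I;0] and locality constraint Φ ∈ L, and rank(Z_h X (I - F†F)) = NuT, then the localized trajectory set Y_L(x0) equals the global trajectory set Y(x0). -/

import Mathlib

open Matrix

/-- Moore–Penrose pseudoinverse conditions. -/
def IsMoorePenrose {m n : Type*} [Fintype m] [Fintype n]
    (M : Matrix m n ℝ) (Mp : Matrix n m ℝ) : Prop :=
  M * Mp * M = M ∧ Mp * M * Mp = Mp ∧ (M * Mp)ᵀ = M * Mp ∧ (Mp * M)ᵀ = Mp * M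

/-- Block-downshift matrix: identity `Nx × Nx` blocks on the first block subdiagonal. -/
def dshift (Nx T : ℕ) : Matrix (Fin (T+1) × Fin Nx) (Fin (T+1) × Fin Nx) ℝ :=
  Matrix.of fun p q => if p.1.val = q.1.val + 1 ∧ p.2 = q.2 then 1 else 0

/-- Block diagonal `Â = blkdiag(A, …, A)` with `T+1` copies. -/
def Ahat {Nx : ℕ} (A : Matrix (Fin Nx) (Fin Nx) ℝ) (T : ℕ) :
    Matrix (Fin (T+1) × Fin Nx) (Fin (T+1) × Fin Nx) ℝ :=
  Matrix.of fun p q => if p.1 = q.1 then A p.2 q.2 else 0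

/-- Block diagonal `B̂ = blkdiag(B, …, B)` with `T` copies, embedded so that `Z * B̂`
has the right dimensions `Nx(T+1) × NuT`. -/
def Bhat {Nx Nu : ℕ} (B : Matrix (Fin Nx) (Fin Nu) ℝ) (T : ℕ) :
    Matrix (Fin (T+1) × Fin Nx) (Fin T × Fin Nu) ℝ :=
  Matrix.of fun p q => if p.1.val = q.1.val then B p.2 q.2 else 0

/-- `Z_{AB} := [I - Z·Â, -Z·B̂]`. -/
def ZAB {Nx Nu : ℕ} (A : Matrix (Fin Nx) (Fin Nx) ℝ) (B : Matrix (Fin Nx) (Fin Nu) ℝ)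
    (T : ℕ) : Matrix (Fin (T+1) × Fin Nx) ((Fin (T+1) × Fin Nx) ⊕ (Fin T × Fin Nu)) ℝ :=
  Matrix.fromCols (1 - dshift Nx T * Ahat A T) (-(dshift Nx T * Bhat B T))

/-- The right-hand side `[I; 0]`: identity in the first `Nx` rows (block `t = 0`),
zeros below. -/
def rhsIO (Nx T : ℕ) : Matrix (Fin (T+1) × Fin Nx) (Fin Nx) ℝ :=
  Matrix.of fun p j => if p.1 = 0 ∧ p.2 = j then 1 else 0

/-- Remove the first `Nx` rows (the block `t = 0` of the state part) of a matrix whose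
rows are indexed like the rows of `Φ`; state block `t` of the result corresponds to
block `t+1` of the input. -/
def tail2 {Nx Nu T : ℕ} {c : Type*}
    (M : Matrix ((Fin (T+1) × Fin Nx) ⊕ (Fin T × Fin Nu)) c ℝ) :
    Matrix ((Fin T × Fin Nx) ⊕ (Fin T × Fin Nu)) c ℝ :=
  Matrix.of fun p j =>
    match p with
    | Sum.inl (t, i) => M (Sum.inl (t.succ, i)) j
    | Sum.inr q => M (Sum.inr q) j

/-- Trajectory set `𝒴(x0)`: trajectories `y = Φ_{Nx+1:,:} x0` over all `Φ` satisfying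
the achievability constraint `Z_{AB} Φ = [I;0]`. -/
def trajSet {Nx Nu : ℕ} (A : Matrix (Fin Nx) (Fin Nx) ℝ)
    (B : Matrix (Fin Nx) (Fin Nu) ℝ) (T : ℕ) (x0 : Fin Nx → ℝ) :
    Set ((Fin T × Fin Nx) ⊕ (Fin T × Fin Nu) → ℝ) :=
  {y | ∃ Φ : Matrix ((Fin (T+1) × Fin Nx) ⊕ (Fin T × Fin Nu)) (Fin Nx) ℝ,
        ZAB A B T * Φ = rhsIO Nx T ∧ y = tail2 Φ *ᵥ x0}

/-- Column-wise vectorization: `vec(M) (j, i) = M i j`. -/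
def vecc {r c : Type*} (M : Matrix r c ℝ) : c × r → ℝ := fun q => M q.2 q.1

/-- Block-diagonal augmentation `M^blk := blkdiag(M, …, M)`, one copy of `M` per
element of the column-index type `c`, so that `vec(M Λ) = M^blk vec(Λ)`. -/
def blkaug (c : Type*) [DecidableEq c] {r r' : Type*} (M : Matrix r r' ℝ) :
    Matrix (c × r) (c × r') ℝ :=
  Matrix.of fun q p => if q.1 = p.1 then M q.2 p.2 else 0

/-- Augmented state matrix `X(x0) := [(x0)_1 I, …, (x0)_{Nx} I]` (identity blocks of
size `r`), satisfying `Λ x0 = X(x0) vec(Λ)`. -/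
def augX {Nx : ℕ} (r : Type*) [DecidableEq r] (x0 : Fin Nx → ℝ) :
    Matrix r (Fin Nx × r) ℝ :=
  Matrix.of fun i q => if i = q.2 then x0 q.1 else 0

/-!
For any feasible `Φf`, every global trajectory differs from `tail2 Φf *ᵥ x0` by a vector
`Z_h X(x0) v`, because homogeneous solutions of `Z_{AB} Ψ = 0` are exactly the
`(I - Z†Z) Λ`. If `Φf` is also local, adding `(I - Z†Z) Λ` keeps it local whenever
`F vec(Λ) = 0`, which holds for `vec(Λ)` in the range of `I - F†F`; so the localized set
contains `tail2 Φf *ᵥ x0 + range(Z_h X(x0) (I - F†F))`. A homogeneous solution has zero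
initial state, so its state trajectory is determined by its inputs, and
`range(Z_h X(x0))` has dimension at most `Nu * T`. The rank hypothesis then makes the two
ranges equal.
-/

section Dynamics
variable {Nx Nu T : ℕ}

lemma dshift_mulVec_zero (v : Fin (T+1) × Fin Nx → ℝ) (i : Fin Nx) :
    (dshift Nx T *ᵥ v) (0, i) = 0 := by
  simp [dshift, mulVec, dotProduct]

lemma dshift_mulVec_succ (v : Fin (T+1) × Fin Nx → ℝ) (t : Fin T) (i : Fin Nx) :
    (dshift Nx T *ᵥ v) (t.succ, i) = v (t.castSucc, i) := by
  have h : ∀ s : Fin (T+1), (t : ℕ) = s ↔ t.castSucc = s := fun s => by simp [Fin.ext_iff]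
  simp [dshift, mulVec, dotProduct, Fintype.sum_prod_type, h, ite_and]

lemma Ahat_mulVec (A : Matrix (Fin Nx) (Fin Nx) ℝ) (v : Fin (T+1) × Fin Nx → ℝ)
    (s : Fin (T+1)) (i : Fin Nx) :
    (Ahat A T *ᵥ v) (s, i) = (A *ᵥ fun k => v (s, k)) i := by
  simp [Ahat, mulVec, dotProduct, Fintype.sum_prod_type]

lemma Bhat_mulVec (B : Matrix (Fin Nx) (Fin Nu) ℝ) (v : Fin T × Fin Nu → ℝ)
    (t : Fin T) (i : Fin Nx) :
    (Bhat B T *ᵥ v) (t.castSucc, i) = (B *ᵥ fun k => v (t, k)) i := by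
  have h : ∀ s : Fin T, (t : ℕ) = s ↔ t = s := fun s => Fin.val_inj
  simp [Bhat, mulVec, dotProduct, Fintype.sum_prod_type, h]

variable (A : Matrix (Fin Nx) (Fin Nx) ℝ) (B : Matrix (Fin Nx) (Fin Nu) ℝ)

lemma ZAB_mulVec_apply_zero (ψ : (Fin (T+1) × Fin Nx) ⊕ (Fin T × Fin Nu) → ℝ) (i : Fin Nx) :
    (ZAB A B T *ᵥ ψ) (0, i) = ψ (.inl (0, i)) := by
  simp [ZAB, sub_mulVec, neg_mulVec, ← mulVec_mulVec, dshift_mulVec_zero]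

lemma ZAB_mulVec_apply_succ (ψ : (Fin (T+1) × Fin Nx) ⊕ (Fin T × Fin Nu) → ℝ)
    (t : Fin T) (i : Fin Nx) :
    (ZAB A B T *ᵥ ψ) (t.succ, i) = ψ (.inl (t.succ, i))
      - (A *ᵥ fun k => ψ (.inl (t.castSucc, k))) i - (B *ᵥ fun k => ψ (.inr (t, k))) i := by
  rw [ZAB, fromCols_mulVec, sub_mulVec, one_mulVec, neg_mulVec, ← mulVec_mulVec,
    ← mulVec_mulVec]
  simp only [Pi.add_apply, Pi.sub_apply, Pi.neg_apply, dshift_mulVec_succ, Ahat_mulVec,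
    Bhat_mulVec, Function.comp_apply]
  ring

lemma eq_zero_of_ZAB_mulVec_eq_zero {ψ : (Fin (T+1) × Fin Nx) ⊕ (Fin T × Fin Nu) → ℝ}
    (hψ : ZAB A B T *ᵥ ψ = 0) (hu : ∀ q, ψ (.inr q) = 0) : ψ = 0 := by
  have hx : ∀ t i, ψ (.inl (t, i)) = 0 := by
    intro t
    induction t using Fin.induction with
    | zero => intro i; rw [← ZAB_mulVec_apply_zero A B ψ, hψ, Pi.zero_apply]
    | succ t ih =>
      intro i
      have := ZAB_mulVec_apply_succ A B ψ t i
      have hA : (fun k => ψ (.inl (t.castSucc, k))) = 0 := funext ih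
      have hB : (fun k => ψ (.inr (t, k))) = 0 := funext fun k => hu (t, k)
      simpa [hψ, hA, hB, eq_comm] using this
  ext (⟨t, i⟩ | q)
  exacts [hx t i, hu q]

end Dynamics

lemma IsMoorePenrose.mul_one_sub_mul_eq_zero {m n : Type*} [Fintype m] [Fintype n]
    [DecidableEq n] {M : Matrix m n ℝ} {Mp : Matrix n m ℝ} (h : IsMoorePenrose M Mp) :
    M * (1 - Mp * M) = 0 := by
  rw [Matrix.mul_sub, Matrix.mul_one, ← Matrix.mul_assoc, h.1, sub_self]

section Vectorization
variable {r r' c : Type*}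

lemma vecc_surjective : Function.Surjective (vecc : Matrix r c ℝ → c × r → ℝ) :=
  fun v => ⟨of fun i j => v (j, i), rfl⟩

section Augmentation
variable {Nx : ℕ} [Fintype r] [DecidableEq r]

lemma augX_mulVec_vecc (x0 : Fin Nx → ℝ) (Λ : Matrix r (Fin Nx) ℝ) :
    augX r x0 *ᵥ vecc Λ = Λ *ᵥ x0 := by
  ext i
  simp [augX, vecc, mulVec, dotProduct, Fintype.sum_prod_type, mul_comm]

lemma mul_augX_mulVec_vecc (M : Matrix r' r ℝ) (x0 : Fin Nx → ℝ) (Λ : Matrix r (Fin Nx) ℝ) :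
    (M * augX r x0) *ᵥ vecc Λ = (M * Λ) *ᵥ x0 := by
  rw [← mulVec_mulVec, augX_mulVec_vecc, mulVec_mulVec]

end Augmentation

variable [Fintype r'] [Fintype c] [DecidableEq c]

lemma blkaug_mulVec_vecc (M : Matrix r r' ℝ) (Λ : Matrix r' c ℝ) :
    blkaug c M *ᵥ vecc Λ = vecc (M * Λ) := by
  ext ⟨j, i⟩
  simp [blkaug, vecc, mulVec, dotProduct, mul_apply, Fintype.sum_prod_type]

lemma vecc_mul_eq_zero_of_mulVec_eq_zero {𝔏 : Finset (c × r)} (M : Matrix r r' ℝ)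
    (Λ : Matrix r' c ℝ) (h : (of fun (l : 𝔏) q => blkaug c M l.1 q) *ᵥ vecc Λ = 0) :
    ∀ l ∈ 𝔏, vecc (M * Λ) l = 0 := by
  intro l hl
  rw [← blkaug_mulVec_vecc]
  exact congrFun h ⟨l, hl⟩

end Vectorization

section Tail
variable {Nx Nu T : ℕ} {c : Type*}

lemma tail2_add (M N : Matrix ((Fin (T+1) × Fin Nx) ⊕ (Fin T × Fin Nu)) c ℝ) :
    tail2 (M + N) = tail2 M + tail2 N := by
  ext (⟨t, i⟩ | q) j <;> rfl

lemma tail2_sub (M N : Matrix ((Fin (T+1) × Fin Nx) ⊕ (Fin T × Fin Nu)) c ℝ) :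
    tail2 (M - N) = tail2 M - tail2 N := by
  ext (⟨t, i⟩ | q) j <;> rfl

lemma tail2_mul {c' : Type*} [Fintype c']
    (M : Matrix ((Fin (T+1) × Fin Nx) ⊕ (Fin T × Fin Nu)) c' ℝ) (N : Matrix c' c ℝ) :
    tail2 (M * N) = tail2 M * N := by
  ext (⟨t, i⟩ | q) j <;> rfl

end Tail

lemma Submodule.finrank_le_card_of_eq_zero_of_comp_inr_eq_zero {K ι κ : Type*} [Field K]
    [Fintype κ] (V : Submodule K (ι ⊕ κ → K)) (hV : ∀ v ∈ V, v ∘ Sum.inr = 0 → v = 0) :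
    Module.finrank K V ≤ Fintype.card κ := by
  have hinj : Function.Injective ((LinearMap.funLeft K K Sum.inr).comp V.subtype) := by
    rw [← LinearMap.ker_eq_bot, LinearMap.ker_eq_bot']
    exact fun v hv => Subtype.ext (hV v v.2 hv)
  simpa using LinearMap.finrank_le_finrank_of_injective hinj

section Trajectories
variable {Nx Nu T : ℕ} (A : Matrix (Fin Nx) (Fin Nx) ℝ) (B : Matrix (Fin Nx) (Fin Nu) ℝ)
  {Zdag : Matrix ((Fin (T+1) × Fin Nx) ⊕ (Fin T × Fin Nu)) (Fin (T+1) × Fin Nx) ℝ}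

lemma tail2_mulVec_eq_zero_of_ZAB_mul_eq_zero {c : Type*} [Fintype c]
    {Ψ : Matrix ((Fin (T+1) × Fin Nx) ⊕ (Fin T × Fin Nu)) c ℝ} (hΨ : ZAB A B T * Ψ = 0)
    (x : c → ℝ) (hu : ∀ q, (tail2 Ψ *ᵥ x) (.inr q) = 0) : tail2 Ψ *ᵥ x = 0 := by
  have hψ : Ψ *ᵥ x = 0 :=
    eq_zero_of_ZAB_mulVec_eq_zero A B (by rw [mulVec_mulVec, hΨ, zero_mulVec]) hu
  ext (⟨t, i⟩ | q)
  exacts [congrFun hψ (.inl (t.succ, i)), hu q]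

lemma finrank_range_tail2_one_sub_mul_augX_le (hMP : IsMoorePenrose (ZAB A B T) Zdag)
    (x0 : Fin Nx → ℝ) :
    Module.finrank ℝ (LinearMap.range (tail2 (1 - Zdag * ZAB A B T) *
      augX ((Fin (T+1) × Fin Nx) ⊕ (Fin T × Fin Nu)) x0).mulVecLin) ≤ Nu * T := by
  refine (Submodule.finrank_le_card_of_eq_zero_of_comp_inr_eq_zero _ ?_).trans_eq
    (by simp [mul_comm])
  rintro _ ⟨v, rfl⟩ hu
  obtain ⟨Λ, rfl⟩ := vecc_surjective v
  rw [mulVecLin_apply, mul_augX_mulVec_vecc, ← tail2_mul] at hu ⊢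
  refine tail2_mulVec_eq_zero_of_ZAB_mul_eq_zero A B ?_ x0 (congrFun hu)
  rw [← Matrix.mul_assoc, hMP.mul_one_sub_mul_eq_zero, Matrix.zero_mul]

lemma tail2_mulVec_sub_mem_range_tail2_one_sub_mul_augX
    {Φ Φ' : Matrix ((Fin (T+1) × Fin Nx) ⊕ (Fin T × Fin Nu)) (Fin Nx) ℝ}
    (h : ZAB A B T * Φ = ZAB A B T * Φ') (x0 : Fin Nx → ℝ) :
    tail2 Φ *ᵥ x0 - tail2 Φ' *ᵥ x0 ∈ LinearMap.range (tail2 (1 - Zdag * ZAB A B T) *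
      augX ((Fin (T+1) × Fin Nx) ⊕ (Fin T × Fin Nu)) x0).mulVecLin := by
  have hfix : (1 - Zdag * ZAB A B T) * (Φ - Φ') = Φ - Φ' := by
    rw [Matrix.sub_mul, Matrix.one_mul, Matrix.mul_assoc, Matrix.mul_sub, h, sub_self,
      Matrix.mul_zero, sub_zero]
  refine ⟨vecc (Φ - Φ'), ?_⟩
  rw [mulVecLin_apply, mul_augX_mulVec_vecc, ← tail2_mul, hfix, tail2_sub, sub_mulVec]

lemma add_one_sub_mul_preserves_constraints (hMP : IsMoorePenrose (ZAB A B T) Zdag)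
    {𝔏 : Finset (Fin Nx × ((Fin T × Fin Nx) ⊕ (Fin T × Fin Nu)))}
    {Φ : Matrix ((Fin (T+1) × Fin Nx) ⊕ (Fin T × Fin Nu)) (Fin Nx) ℝ}
    (hloc : ∀ l ∈ 𝔏, vecc (tail2 Φ) l = 0)
    {Λ : Matrix ((Fin (T+1) × Fin Nx) ⊕ (Fin T × Fin Nu)) (Fin Nx) ℝ}
    (hΛ : (of fun (l : 𝔏) q => blkaug (Fin Nx) (tail2 (1 - Zdag * ZAB A B T)) l.1 q) *ᵥ
      vecc Λ = 0) :
    ZAB A B T * (Φ + (1 - Zdag * ZAB A B T) * Λ) = ZAB A B T * Φ ∧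
      ∀ l ∈ 𝔏, vecc (tail2 (Φ + (1 - Zdag * ZAB A B T) * Λ)) l = 0 := by
  refine ⟨?_, fun l hl => ?_⟩
  · rw [Matrix.mul_add, ← Matrix.mul_assoc, hMP.mul_one_sub_mul_eq_zero, Matrix.zero_mul,
      add_zero]
  · rw [tail2_add, tail2_mul]
    show vecc (tail2 Φ) l + vecc (tail2 (1 - Zdag * ZAB A B T) * Λ) l = 0
    rw [hloc l hl, vecc_mul_eq_zero_of_mulVec_eq_zero _ Λ hΛ l hl, add_zero]

end Trajectories

theorem localized_eq_global_dynamics_first_general {Nx Nu T : ℕ}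
    (A : Matrix (Fin Nx) (Fin Nx) ℝ) (B : Matrix (Fin Nx) (Fin Nu) ℝ)
    (Zdag : Matrix ((Fin (T+1) × Fin Nx) ⊕ (Fin T × Fin Nu)) (Fin (T+1) × Fin Nx) ℝ)
    (hMP : IsMoorePenrose (ZAB A B T) Zdag)
    (x0 : Fin Nx → ℝ)
    (𝔏 : Finset (Fin Nx × ((Fin T × Fin Nx) ⊕ (Fin T × Fin Nu))))
    (Zh : Matrix ((Fin T × Fin Nx) ⊕ (Fin T × Fin Nu))
      ((Fin (T+1) × Fin Nx) ⊕ (Fin T × Fin Nu)) ℝ)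
    (hZh : Zh = tail2 (1 - Zdag * ZAB A B T))
    (F : Matrix ↥𝔏 (Fin Nx × ((Fin (T+1) × Fin Nx) ⊕ (Fin T × Fin Nu))) ℝ)
    (hF : F = Matrix.of fun l q => blkaug (Fin Nx) Zh l.1 q)
    (Fdag : Matrix (Fin Nx × ((Fin (T+1) × Fin Nx) ⊕ (Fin T × Fin Nu))) ↥𝔏 ℝ)
    (hMPF : IsMoorePenrose F Fdag)
    (hfeas : ∃ Φ : Matrix ((Fin (T+1) × Fin Nx) ⊕ (Fin T × Fin Nu)) (Fin Nx) ℝ,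
      ZAB A B T * Φ = rhsIO Nx T ∧ ∀ l ∈ 𝔏, vecc (tail2 Φ) l = 0)
    (hrank : ((Zh * augX ((Fin (T+1) × Fin Nx) ⊕ (Fin T × Fin Nu)) x0)
        * (1 - Fdag * F)).rank = Nu * T) :
    {y | ∃ Φ : Matrix ((Fin (T+1) × Fin Nx) ⊕ (Fin T × Fin Nu)) (Fin Nx) ℝ,
        ZAB A B T * Φ = rhsIO Nx T ∧ (∀ l ∈ 𝔏, vecc (tail2 Φ) l = 0) ∧
        y = tail2 Φ *ᵥ x0} =
      trajSet A B T x0 := by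
  subst hZh
  set G := tail2 (1 - Zdag * ZAB A B T) * augX ((Fin (T+1) × Fin Nx) ⊕ (Fin T × Fin Nu)) x0
  have hrange : LinearMap.range (G * (1 - Fdag * F)).mulVecLin = LinearMap.range G.mulVecLin :=
    Submodule.eq_of_le_of_finrank_le
      (mulVecLin_mul G (1 - Fdag * F) ▸ LinearMap.range_comp_le_range _ _)
      ((finrank_range_tail2_one_sub_mul_augX_le A B hMP x0).trans hrank.ge)
  ext y
  refine ⟨fun ⟨Φ, hΦ, _, hy⟩ => ⟨Φ, hΦ, hy⟩, ?_⟩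
  rintro ⟨Φ, hΦ, rfl⟩
  obtain ⟨Φf, hΦf, hloc⟩ := hfeas
  obtain ⟨w, hw⟩ : tail2 Φ *ᵥ x0 - tail2 Φf *ᵥ x0 ∈
      LinearMap.range (G * (1 - Fdag * F)).mulVecLin :=
    hrange ▸ tail2_mulVec_sub_mem_range_tail2_one_sub_mul_augX A B (hΦ.trans hΦf.symm) x0
  obtain ⟨Λ, hΛ⟩ := vecc_surjective ((1 - Fdag * F) *ᵥ w)
  have hFΛ : F *ᵥ vecc Λ = 0 := by
    rw [hΛ, mulVec_mulVec, hMPF.mul_one_sub_mul_eq_zero, zero_mulVec]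
  obtain ⟨hdyn, hloc'⟩ := add_one_sub_mul_preserves_constraints A B hMP hloc (hF ▸ hFΛ)
  refine ⟨_, hdyn.trans hΦf, hloc', ?_⟩
  rw [mulVecLin_apply, ← mulVec_mulVec, ← hΛ, mul_augX_mulVec_vecc] at hw
  rw [tail2_add, tail2_mul, add_mulVec, hw, add_sub_cancel]

/-- optimal global performance, dynamics-first: if `x0` has a nonzero
entry, some `Φ` satisfies both the dynamics constraint and the locality constraint,
and `rank(Z_h X (I - F†F)) = NuT`, then the localized trajectory set equals the global
trajectory set. -/
theorem localized_eq_global_dynamics_first {Nx Nu T : ℕ}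
    (A : Matrix (Fin Nx) (Fin Nx) ℝ) (B : Matrix (Fin Nx) (Fin Nu) ℝ)
    (Zdag : Matrix ((Fin (T+1) × Fin Nx) ⊕ (Fin T × Fin Nu)) (Fin (T+1) × Fin Nx) ℝ)
    (hMP : IsMoorePenrose (ZAB A B T) Zdag)
    (x0 : Fin Nx → ℝ) (hx0 : x0 ≠ 0)
    (𝔏 : Finset (Fin Nx × ((Fin T × Fin Nx) ⊕ (Fin T × Fin Nu))))
    (Zp : Matrix ((Fin T × Fin Nx) ⊕ (Fin T × Fin Nu)) (Fin Nx) ℝ)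
    (hZp : Zp = tail2 (Zdag * rhsIO Nx T))
    (Zh : Matrix ((Fin T × Fin Nx) ⊕ (Fin T × Fin Nu))
      ((Fin (T+1) × Fin Nx) ⊕ (Fin T × Fin Nu)) ℝ)
    (hZh : Zh = tail2 (1 - Zdag * ZAB A B T))
    (F : Matrix ↥𝔏 (Fin Nx × ((Fin (T+1) × Fin Nx) ⊕ (Fin T × Fin Nu))) ℝ)
    (hF : F = Matrix.of fun l q => blkaug (Fin Nx) Zh l.1 q)
    (Fdag : Matrix (Fin Nx × ((Fin (T+1) × Fin Nx) ⊕ (Fin T × Fin Nu))) ↥𝔏 ℝ)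
    (hMPF : IsMoorePenrose F Fdag)
    (hfeas : ∃ Φ : Matrix ((Fin (T+1) × Fin Nx) ⊕ (Fin T × Fin Nu)) (Fin Nx) ℝ,
      ZAB A B T * Φ = rhsIO Nx T ∧ ∀ l ∈ 𝔏, vecc (tail2 Φ) l = 0)
    (hrank : ((Zh * augX ((Fin (T+1) × Fin Nx) ⊕ (Fin T × Fin Nu)) x0)
        * (1 - Fdag * F)).rank = Nu * T) :
    {y | ∃ Φ : Matrix ((Fin (T+1) × Fin Nx) ⊕ (Fin T × Fin Nu)) (Fin Nx) ℝ,
        ZAB A B T * Φ = rhsIO Nx T ∧ (∀ l ∈ 𝔏, vecc (tail2 Φ) l = 0) ∧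
        y = tail2 Φ *ᵥ x0} =
      trajSet A B T x0 :=
  localized_eq_global_dynamics_first_general A B Zdag hMP x0 𝔏 Zh hZh F hF Fdag hMPF hfeas hrank
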